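/- Let G be D_m with m even, or Q_m, with degree-one characters χ₃, χ₄ as in the standard character tables. Set α₃ = Σ_{g∈G} χ₃(g) x_g g and α₄ = Σ_{g∈⟨a⟩} χ₄(g) x_{g^{-1}} g + Σ_{g∈G\⟨a⟩} χ₄(g) x_g g in C[G]. Then α₃ and α₄ commute: α₃α₄ = α₄α₃. -/

import Mathlib

/-- `α₁ = Σ_{g∈G} x_g g` for `D_m`. -/
noncomputable def dihedralAlpha1 (m : ℕ) [NeZero m] (x : DihedralGroup m → ℂ) :
    MonoidAlgebra ℂ (DihedralGroup m) :=
  ∑ g : DihedralGroup m, MonoidAlgebra.single g (x g)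

/-- `α₂ = Σ_{g∈⟨a⟩} x_{g⁻¹} g − Σ_{g∈G∖⟨a⟩} x_g g` for `D_m`. -/
noncomputable def dihedralAlpha2 (m : ℕ) [NeZero m] (x : DihedralGroup m → ℂ) :
    MonoidAlgebra ℂ (DihedralGroup m) :=
  (∑ k : ZMod m, MonoidAlgebra.single (DihedralGroup.r k) (x ((DihedralGroup.r k)⁻¹))) -
  ∑ k : ZMod m, MonoidAlgebra.single (DihedralGroup.sr k) (x (DihedralGroup.sr k))

/-- `α₃ = Σ_g χ₃(g) x_g g` for `D_m`, where `χ₃(a^k) = (−1)^k`, `χ₃(a^k b) = (−1)^k c₃`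
with `c₃ = χ₃(b)`. -/
noncomputable def dihedralAlpha3 (m : ℕ) [NeZero m] (c₃ : ℂ) (x : DihedralGroup m → ℂ) :
    MonoidAlgebra ℂ (DihedralGroup m) :=
  (∑ k : ZMod m, MonoidAlgebra.single (DihedralGroup.r k)
      ((-1 : ℂ) ^ k.val * x (DihedralGroup.r k))) +
  ∑ k : ZMod m, MonoidAlgebra.single (DihedralGroup.r k * DihedralGroup.sr 0)
      ((-1 : ℂ) ^ k.val * c₃ * x (DihedralGroup.r k * DihedralGroup.sr 0))

/-- `α₄ = Σ_{g∈⟨a⟩} χ₄(g) x_{g⁻¹} g + Σ_{g∉⟨a⟩} χ₄(g) x_g g` for `D_m`, where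
`χ₄(a^k) = (−1)^k`, `χ₄(a^k b) = (−1)^k c₄` with `c₄ = χ₄(b)`. -/
noncomputable def dihedralAlpha4 (m : ℕ) [NeZero m] (c₄ : ℂ) (x : DihedralGroup m → ℂ) :
    MonoidAlgebra ℂ (DihedralGroup m) :=
  (∑ k : ZMod m, MonoidAlgebra.single (DihedralGroup.r k)
      ((-1 : ℂ) ^ k.val * x ((DihedralGroup.r k)⁻¹))) +
  ∑ k : ZMod m, MonoidAlgebra.single (DihedralGroup.r k * DihedralGroup.sr 0)
      ((-1 : ℂ) ^ k.val * c₄ * x (DihedralGroup.r k * DihedralGroup.sr 0))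

/-- `α₁ = Σ_{g∈G} x_g g` for `Q_m`. -/
noncomputable def quaternionAlpha1 (m : ℕ) [NeZero m] (x : QuaternionGroup m → ℂ) :
    MonoidAlgebra ℂ (QuaternionGroup m) :=
  ∑ g : QuaternionGroup m, MonoidAlgebra.single g (x g)

/-- `α₂ = Σ_{g∈⟨a⟩} x_{g⁻¹} g − Σ_{g∈G∖⟨a⟩} x_g g` for `Q_m`. -/
noncomputable def quaternionAlpha2 (m : ℕ) [NeZero m] (x : QuaternionGroup m → ℂ) :
    MonoidAlgebra ℂ (QuaternionGroup m) :=
  (∑ k : ZMod (2 * m),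
      MonoidAlgebra.single (QuaternionGroup.a k) (x ((QuaternionGroup.a k)⁻¹))) -
  ∑ k : ZMod (2 * m), MonoidAlgebra.single (QuaternionGroup.xa k) (x (QuaternionGroup.xa k))

/-- `α₃ = Σ_g χ₃(g) x_g g` for `Q_m`, where `χ₃(a^k) = (−1)^k`, `χ₃(a^k b) = (−1)^k c₃`. -/
noncomputable def quaternionAlpha3 (m : ℕ) [NeZero m] (c₃ : ℂ) (x : QuaternionGroup m → ℂ) :
    MonoidAlgebra ℂ (QuaternionGroup m) :=
  (∑ k : ZMod (2 * m), MonoidAlgebra.single (QuaternionGroup.a k)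
      ((-1 : ℂ) ^ k.val * x (QuaternionGroup.a k))) +
  ∑ k : ZMod (2 * m), MonoidAlgebra.single (QuaternionGroup.a k * QuaternionGroup.xa 0)
      ((-1 : ℂ) ^ k.val * c₃ * x (QuaternionGroup.a k * QuaternionGroup.xa 0))

/-- `α₄ = Σ_{g∈⟨a⟩} χ₄(g) x_{g⁻¹} g + Σ_{g∉⟨a⟩} χ₄(g) x_g g` for `Q_m`, where
`χ₄(a^k) = (−1)^k`, `χ₄(a^k b) = (−1)^k c₄`. -/
noncomputable def quaternionAlpha4 (m : ℕ) [NeZero m] (c₄ : ℂ) (x : QuaternionGroup m → ℂ) :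
    MonoidAlgebra ℂ (QuaternionGroup m) :=
  (∑ k : ZMod (2 * m), MonoidAlgebra.single (QuaternionGroup.a k)
      ((-1 : ℂ) ^ k.val * x ((QuaternionGroup.a k)⁻¹))) +
  ∑ k : ZMod (2 * m), MonoidAlgebra.single (QuaternionGroup.a k * QuaternionGroup.xa 0)
      ((-1 : ℂ) ^ k.val * c₄ * x (QuaternionGroup.a k * QuaternionGroup.xa 0))

/-!
Write `α₃ = T + U` and `α₄ = T' - U`, where `T`, `T'` are the parts supported on the rotations
`rₖ` and `U` the part on the reflections `rₖ s` (the sign comes from `χ₄(b) = -χ₃(b)`).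
Since `s rₖ = r₋ₖ s`, pushing a rotation sum past a reflection sum reverses its index; as
`(-1)^k` is even in `k` when `n` is even and `x_{rₖ⁻¹} = x_{r₋ₖ}`, this turns `T` into `T'` and
back, i.e. `T U = U T'` and `T' U = U T`. Together with `T T' = T' T` these three relations make
`T + U` and `T' - U` commute in any ring.
-/

theorem Commute.add_sub_of_mul_eq {R : Type*} [Ring R] {a a' b : R} (h : Commute a a')
    (hab : a * b = b * a') (hab' : a' * b = b * a) : Commute (a + b) (a' - b) := by
  unfold Commute SemiconjBy
  simp only [add_mul, mul_add, sub_mul, mul_sub, h.eq, hab, hab']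
  abel

theorem ZMod.neg_one_pow_val_neg {R : Type*} [Ring R] {n : ℕ} [NeZero n] (hn : Even n)
    (k : ZMod n) : (-1 : R) ^ (-k).val = (-1 : R) ^ k.val := by
  rw [ZMod.neg_val]
  split_ifs with h
  · simp [h]
  · rw [neg_one_pow_eq_pow_mod_two, neg_one_pow_eq_pow_mod_two (n := k.val)]
    have := ZMod.val_lt k
    obtain ⟨t, rfl⟩ := hn
    congr 1
    omega

section RotationReflection

open MonoidAlgebra

variable {G : Type*} [Group G] {n : ℕ} [NeZero n] (r : ZMod n → G) (s : G)

noncomputable def rotationSum (f : ZMod n → ℂ) : MonoidAlgebra ℂ G :=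
  ∑ k, single (r k) (f k)

noncomputable def reflectionSum (g : ZMod n → ℂ) : MonoidAlgebra ℂ G :=
  ∑ k, single (r k * s) (g k)

variable {r s}

theorem commute_rotationSum (hr : ∀ k l, r k * r l = r (k + l)) (f f' : ZMod n → ℂ) :
    Commute (rotationSum r f) (rotationSum r f') := by
  unfold Commute SemiconjBy rotationSum
  rw [Fintype.sum_mul_sum, Fintype.sum_mul_sum, Finset.sum_comm]
  refine Finset.sum_congr rfl fun k _ => Finset.sum_congr rfl fun l _ => ?_
  rw [single_mul_single, single_mul_single, hr, hr, add_comm, mul_comm]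

theorem rotationSum_mul_reflectionSum (hr : ∀ k l, r k * r l = r (k + l))
    (hs : ∀ k, s * r k = r (-k) * s) (f g : ZMod n → ℂ) :
    rotationSum r f * reflectionSum r s g =
      reflectionSum r s g * rotationSum r (fun k => f (-k)) := by
  unfold rotationSum reflectionSum
  rw [Fintype.sum_mul_sum, Fintype.sum_mul_sum, Finset.sum_comm]
  refine Finset.sum_congr rfl fun l _ => ?_
  rw [← Equiv.sum_comp (Equiv.neg (ZMod n))]
  refine Finset.sum_congr rfl fun k _ => ?_
  rw [single_mul_single, single_mul_single, Equiv.neg_apply, mul_assoc, hs, ← mul_assoc,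
    ← mul_assoc, hr, hr, add_comm, mul_comm]

theorem commute_rotationSum_add_reflectionSum (hr : ∀ k l, r k * r l = r (k + l))
    (hs : ∀ k, s * r k = r (-k) * s) (f g : ZMod n → ℂ) :
    Commute (rotationSum r f + reflectionSum r s g)
      (rotationSum r (fun k => f (-k)) - reflectionSum r s g) := by
  refine (commute_rotationSum hr _ _).add_sub_of_mul_eq
    (rotationSum_mul_reflectionSum hr hs f g) ?_
  simpa only [neg_neg] using rotationSum_mul_reflectionSum hr hs (fun k => f (-k)) g

theorem reflectionSum_neg (g : ZMod n → ℂ) :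
    reflectionSum r s (fun k => -g k) = -reflectionSum r s g := by
  simp only [reflectionSum, single_neg, Finset.sum_neg_distrib]

theorem commute_alpha3_alpha4_of_even (hn : Even n) (hr : ∀ k l, r k * r l = r (k + l))
    (hs : ∀ k, s * r k = r (-k) * s) (c : ℂ) (x : G → ℂ) :
    Commute
      (rotationSum r (fun k => (-1) ^ k.val * x (r k)) +
        reflectionSum r s (fun k => (-1) ^ k.val * c * x (r k * s)))
      (rotationSum r (fun k => (-1) ^ k.val * x (r k)⁻¹) +
        reflectionSum r s (fun k => (-1) ^ k.val * (-c) * x (r k * s))) := by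
  have hr_zero : r 0 = 1 := (mul_eq_left (a := r 0)).mp (by rw [hr, add_zero])
  have hr_inv (k : ZMod n) : (r k)⁻¹ = r (-k) :=
    (eq_inv_of_mul_eq_one_left (by rw [hr, neg_add_cancel, hr_zero])).symm
  have alpha4_eq :
      rotationSum r (fun k => (-1) ^ k.val * x (r k)⁻¹) +
        reflectionSum r s (fun k => (-1) ^ k.val * (-c) * x (r k * s)) =
      rotationSum r (fun k => (-1) ^ (-k).val * x (r (-k))) -
        reflectionSum r s (fun k => (-1) ^ k.val * c * x (r k * s)) := by
    simp only [hr_inv, ZMod.neg_one_pow_val_neg hn, sub_eq_add_neg, ← reflectionSum_neg, mul_neg,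
      neg_mul]
  rw [alpha4_eq]
  exact commute_rotationSum_add_reflectionSum hr hs _ _

end RotationReflection

/-- For `G = D_m` (`m` even, `χ₃(b)=1`, `χ₄(b)=−1`) or `G = Q_m` (`χ₃(b)=i`, `χ₄(b)=−i`
for `m` odd; `χ₃(b)=1`, `χ₄(b)=−1` for `m` even), the elements `α₃` and `α₄` of `ℂ[G]`
commute: `α₃ α₄ = α₄ α₃`. -/
theorem alpha3_alpha4_commute (m : ℕ) [NeZero m]
    (x : DihedralGroup m → ℂ) (y : QuaternionGroup m → ℂ) :
    (Even m →
      dihedralAlpha3 m 1 x * dihedralAlpha4 m (-1) x =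
        dihedralAlpha4 m (-1) x * dihedralAlpha3 m 1 x) ∧
    (Odd m →
      quaternionAlpha3 m Complex.I y * quaternionAlpha4 m (-Complex.I) y =
        quaternionAlpha4 m (-Complex.I) y * quaternionAlpha3 m Complex.I y) ∧
    (Even m →
      quaternionAlpha3 m 1 y * quaternionAlpha4 m (-1) y =
        quaternionAlpha4 m (-1) y * quaternionAlpha3 m 1 y) := by
  have dihedral_hs (k : ZMod m) : DihedralGroup.sr 0 * DihedralGroup.r k =
      DihedralGroup.r (-k) * DihedralGroup.sr 0 := by
    simp only [DihedralGroup.sr_mul_r, DihedralGroup.r_mul_sr, zero_add, zero_sub, neg_neg]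
  have quaternion_hs (k : ZMod (2 * m)) : QuaternionGroup.xa 0 * QuaternionGroup.a k =
      QuaternionGroup.a (-k) * QuaternionGroup.xa 0 := by
    simp only [QuaternionGroup.xa_mul_a, QuaternionGroup.a_mul_xa, zero_add, zero_sub, neg_neg]
  have quaternion_commute (c : ℂ) :=
    commute_alpha3_alpha4_of_even (even_two_mul m) QuaternionGroup.a_mul_a quaternion_hs c y
  exact ⟨fun hm => (commute_alpha3_alpha4_of_even hm DihedralGroup.r_mul_r dihedral_hs 1 x).eq,
    fun _ => (quaternion_commute Complex.I).eq, fun _ => (quaternion_commute 1).eq⟩
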